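/- arXiv:1605.01968 — 2 statements merged into one kernel-verified Lean document; each statement's English description precedes it below -/
import Mathlib

section
/- In the monoid M of the previous context (classes of projections over C(ℙ¹(𝒯))), the cancellation law x + z = y + z ⟹ x = y holds whenever x and y are of type II or type III (rank ≥ 1), but fails for type I: there exist distinct type-I elements (m,l) ≠ (m',l') with m + l = m' + l' that become equal after adding any type-II element. -/
/-! The map `phi` to `K₀ ≅ ℤ × ℤ` is additive and injective on classes of rank at least one,
so cancellation among them is inherited from the group `ℤ × ℤ`. A type-I class enters the sum
with a type-II class only through `m + l`, so `(0, 1)` and `(1, 0)` cannot be cancelled. -/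

/-- Representatives of unitary equivalence classes of projections over `C(ℙ¹(𝒯))`:
type I is `P_m ⊕ P_l`, type II is `Ĩₙ ⊞ (P_j ⊕ 0)` (rank `n > 0`), type III is
`Ĩ_{n-1} ⊞ (Ĩ - (P_k ⊕ 0))` (rank `n > 0`, `k > 0`). -/
inductive Cls : Type
  | I : ℕ → ℕ → Cls
  | II : ℕ+ → ℕ → Cls
  | III : ℕ+ → ℕ+ → Cls
  deriving DecidableEq

namespace Cls

/-- The addition of classes of projections (diagonal direct sum of projections). -/
def add : Cls → Cls → Cls
  | I m l, I m' l' => I (m + m') (l + l')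
  | I m l, II n j => II n (m + l + j)
  | II n j, I m l => II n (m + l + j)
  | I m l, III n k =>
      if h : (k : ℕ) ≤ m + l then II n (m + l - k)
      else III n ⟨(k : ℕ) - (m + l), by omega⟩
  | III n k, I m l =>
      if h : (k : ℕ) ≤ m + l then II n (m + l - k)
      else III n ⟨(k : ℕ) - (m + l), by omega⟩
  | II n j, II n' j' => II (n + n') (j + j')
  | II n j, III n' k =>
      if h : (k : ℕ) ≤ j then II (n + n') (j - k)
      else III (n + n') ⟨(k : ℕ) - j, by omega⟩
  | III n' k, II n j =>
      if h : (k : ℕ) ≤ j then II (n + n') (j - k)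
      else III (n + n') ⟨(k : ℕ) - j, by omega⟩
  | III n k, III n' k' => III (n + n') (k + k')

/-- The map to `K₀(C(ℙ¹(𝒯))) ≅ ℤ × ℤ`. -/
def phi : Cls → ℤ × ℤ
  | I m l => ((m : ℤ) + l, 0)
  | II n j => ((j : ℤ), (n : ℕ))
  | III n k => (-((k : ℕ) : ℤ), (n : ℕ))

/-- classes of rank at least one, i.e. of type II or type III -/
def rankPos : Cls → Prop
  | I _ _ => False
  | II _ _ => True
  | III _ _ => True

lemma phi_add (a b : Cls) : phi (add a b) = phi a + phi b := by
  cases a <;> cases b <;> simp only [add] <;> (try split) <;> ext <;>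
    simp only [phi, Prod.fst_add, Prod.snd_add, PNat.add_coe, PNat.mk_coe] <;> push_cast <;> omega

lemma phi_injOn_rankPos : Set.InjOn phi {x | rankPos x} := by
  rintro (_ | ⟨n, j⟩ | ⟨n, k⟩) hx (_ | ⟨n', j'⟩ | ⟨n', k'⟩) hy h <;>
    simp only [Set.mem_ofPred_eq, rankPos] at hx hy <;>
    simp only [phi, Prod.mk.injEq, Nat.cast_inj, PNat.coe_inj, neg_inj] at h
  · rw [h.1, h.2]
  · have := k'.pos; omega
  · have := k.pos; omega
  · rw [h.1, h.2]

theorem add_right_cancel_of_rankPos {x y : Cls} (z : Cls) (hx : rankPos x) (hy : rankPos y)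
    (h : add x z = add y z) : x = y :=
  phi_injOn_rankPos hx hy <| add_right_cancel (b := phi z) <| by rw [← phi_add, ← phi_add, h]

theorem add_I_II_eq_of_add_eq {m l m' l' : ℕ} (h : m + l = m' + l') (n : ℕ+) (j : ℕ) :
    add (I m l) (II n j) = add (I m' l') (II n j) := by
  simp only [add, h]

/-- cancellation `x + z = y + z → x = y` holds whenever `x, y` have rank ≥ 1
(type II or III), but fails for type I: there are distinct type-I elements `(m,l) ≠ (m',l')`
with `m + l = m' + l'` which become equal after adding any type-II element. -/
theorem stmt_8 :
    (∀ x y z : Cls, rankPos x → rankPos y → add x z = add y z → x = y) ∧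
    (∃ m l m' l' : ℕ, (m, l) ≠ (m', l') ∧ m + l = m' + l' ∧
      ∀ (n : ℕ+) (j : ℕ), add (I m l) (II n j) = add (I m' l') (II n j)) :=
  ⟨fun _ _ z hx hy => add_right_cancel_of_rankPos z hx hy,
    ⟨0, 1, 1, 0, by decide, rfl, add_I_II_eq_of_add_eq rfl⟩⟩

end Cls
end

section
/- The image of the monoid homomorphism φ: M → ℤ × ℤ (with φ((m,l)_I) = (m+l,0), φ((n,j)_II) = (j,n), φ((n,k)_III) = (−k,n)) equals the set (ℤ≥0 × {0}) ∪ (ℤ × ℤ>0), i.e., the positive cone of K₀(C(ℙ¹(𝒯))) is {(a,b) ∈ ℤ² : b > 0, or (b = 0 and a ≥ 0)}. -/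
namespace Cls

lemma phi_mem_positiveCone (c : Cls) : (0 ≤ (phi c).1 ∧ (phi c).2 = 0) ∨ 0 < (phi c).2 := by
  cases c with
  | I m l => exact Or.inl ⟨by simp only [phi]; positivity, rfl⟩
  | II n j => exact Or.inr (by simp only [phi]; exact_mod_cast n.pos)
  | III n k => exact Or.inr (by simp only [phi]; exact_mod_cast n.pos)

lemma phi_I_toNat {a : ℤ} (ha : 0 ≤ a) : phi (I a.toNat 0) = (a, 0) := by
  simp [phi, ha]

lemma phi_II_toNat {a b : ℤ} (ha : 0 ≤ a) (hb : 0 < b) :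
    phi (II ⟨b.toNat, by omega⟩ a.toNat) = (a, b) := by
  simp [phi, ha, hb.le]

lemma phi_III_toNat {a b : ℤ} (ha : a < 0) (hb : 0 < b) :
    phi (III ⟨b.toNat, by omega⟩ ⟨(-a).toNat, by omega⟩) = (a, b) := by
  simp [phi, ha.le, hb.le]

/-- the image of the monoid homomorphism `φ : M → ℤ × ℤ` equals
`(ℤ≥0 × {0}) ∪ (ℤ × ℤ>0)`, the positive cone of `K₀(C(ℙ¹(𝒯)))`. -/
theorem stmt_9 :
    Set.range phi = {p : ℤ × ℤ | (0 ≤ p.1 ∧ p.2 = 0) ∨ 0 < p.2} := by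
  refine Set.Subset.antisymm (Set.range_subset_iff.2 phi_mem_positiveCone) ?_
  rintro ⟨a, b⟩ (⟨ha, rfl : b = 0⟩ | hb)
  · exact ⟨_, phi_I_toNat ha⟩
  · rcases le_or_gt 0 a with ha | ha
    · exact ⟨_, phi_II_toNat ha hb⟩
    · exact ⟨_, phi_III_toNat ha hb⟩

end Cls
end
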